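/- arXiv:2104.07550 — 2 statements merged into one kernel-verified Lean document; each statement's English description precedes it below -/
import Mathlib

section
/- Characterization of the unknown-value output for the multiplication-based integral: ∫^{⊗_D}_{DPR,μ} f = * if and only if μ({i : f_i >_ℓ *}) ≤_ℓ *, μ({i : f_i ≥_ℓ *}) ≥_ℓ *, and f_i >_ℓ 0 for at least one i ∈ C. -/
/-- A linearly ordered (bounded, integral-scale) residuated lattice:
`⊥` plays the role of `0` and `⊤` the role of `1`. -/
class LinResLat (L : Type*) extends LinearOrder L, BoundedOrder L where
  mul : L → L → L
  imp : L → L → L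
  mul_comm : ∀ a b : L, mul a b = mul b a
  mul_assoc : ∀ a b c : L, mul (mul a b) c = mul a (mul b c)
  mul_one : ∀ a : L, mul a ⊤ = a
  adjoint : ∀ a b c : L, mul a b ≤ c ↔ a ≤ imp b c
  bot_lt_top : (⊥ : L) < ⊤

/-- The Dragonfly carrier `L* = L ∪ {*}`. -/
inductive Dstar (L : Type*) where
  | of : L → Dstar L
  | star : Dstar L

namespace Dstar

variable {L : Type*} [LinResLat L]

/-- Dragonfly multiplication `⊗_D`. -/
def dmul : Dstar L → Dstar L → Dstar L
  | of a, of b => of (LinResLat.mul a b)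
  | of a, star => if a = ⊥ then of ⊥ else star
  | star, of b => if b = ⊥ then of ⊥ else star
  | star, star => star

/-- Dragonfly meet `∧_D`. -/
def dmeet : Dstar L → Dstar L → Dstar L
  | of a, of b => of (a ⊓ b)
  | of a, star => if a = ⊥ then of ⊥ else star
  | star, of b => if b = ⊥ then of ⊥ else star
  | star, star => star

/-- Dragonfly join `∨_D`. -/
def djoin : Dstar L → Dstar L → Dstar L
  | of a, of b => of (a ⊔ b)
  | of a, star => if a = ⊥ then star else of a
  | star, of b => if b = ⊥ then star else of b
  | star, star => star

/-- Dragonfly residuum `→_D`. -/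
def dimp : Dstar L → Dstar L → Dstar L
  | of a, of b => of (LinResLat.imp a b)
  | of a, star => if a = ⊥ then of ⊤ else star
  | star, of b => if b = ⊥ then star else of b
  | star, star => of ⊤

/-- Embedding of `L*` into `Lex (L × Bool)` realizing the linear order `≤_ℓ`
which extends the order of `L` with `0 <_ℓ * <_ℓ α` for all `α ∈ L \ {0}`. -/
def emb : Dstar L → Lex (L × Bool)
  | of a => toLex (a, false)
  | star => toLex ((⊥ : L), true)

theorem emb_injective : Function.Injective (emb (L := L)) := by
  intro x y h
  cases x <;> cases y <;>
    simp only [emb, toLex_inj, Prod.mk.injEq] at h <;> simp_all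

/-- The linear order `≤_ℓ` on the Dragonfly algebra. -/
instance : LinearOrder (Dstar L) := LinearOrder.lift' emb emb_injective

theorem le_def (x y : Dstar L) : x ≤ y ↔ emb x ≤ emb y := Iff.rfl

instance : OrderBot (Dstar L) where
  bot := of ⊥
  bot_le x := by
    cases x with
    | of a => rw [le_def]; simp only [emb, Prod.Lex.le_iff]; exact bot_le.lt_or_eq.imp id (by simp_all)
    | star => rw [le_def]; simp [emb, Prod.Lex.le_iff]
instance : OrderTop (Dstar L) where
  top := of ⊤
  le_top x := by
    cases x with
    | of a => rw [le_def]; simp only [emb, Prod.Lex.le_iff]; exact le_top.lt_or_eq.imp id (by simp_all)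
    | star => rw [le_def]; simp only [emb, Prod.Lex.le_iff]; exact Or.inl LinResLat.bot_lt_top

theorem bot_eq : (⊥ : Dstar L) = of ⊥ := rfl
theorem top_eq : (⊤ : Dstar L) = of ⊤ := rfl

variable {ι : Type*} [Fintype ι] [DecidableEq ι]

/-- The multiplication-based qualitative (DPR) integral on the Dragonfly algebra:
`∫^{⊗_D}_{DPR,μ} f = ⋁_{A ⊆ C} (μ(A) ⊗_D ⋀_{i ∈ A} f_i)`. -/
def integMul (μ : Finset ι → Dstar L) (f : ι → Dstar L) : Dstar L :=
  Finset.univ.powerset.sup fun A => dmul (μ A) (A.inf f)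

/-- The conjugate capacity `μ^c(A) = μ(C \ A) →_D 0`. -/
def conj (μ : Finset ι → Dstar L) (A : Finset ι) : Dstar L :=
  dimp (μ Aᶜ) (of ⊥)

/-- The residuum-based qualitative (DPR) integral on the Dragonfly algebra:
`∫^{→_D}_{DPR,μ} f = ⋀_{A ⊆ C} (μ^c(A) →_D ⋁_{i ∈ A} f_i)`. -/
def integImp (μ : Finset ι → Dstar L) (f : ι → Dstar L) : Dstar L :=
  Finset.univ.powerset.inf fun A => dimp (conj μ A) (A.sup f)

end Dstar

/-
The elements of `L*` lying `≤_ℓ *` are `0` and `*`, and those lying `≥_ℓ *` are `*` and the nonzero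
elements of `L`. Without zero divisors, `x ⊗_D y ≤_ℓ *` holds iff one factor is `≤_ℓ *`, and
`x ⊗_D y ≥_ℓ *` iff both factors are `≥_ℓ *`. Hence the integral is `≤_ℓ *` iff every `A` with
`⋀_A f >_ℓ *` has `μ(A) ≤_ℓ *`, which by monotonicity of `μ` means `μ({f >_ℓ *}) ≤_ℓ *`; and it is
`≥_ℓ *` iff some `A` with `⋀_A f ≥_ℓ *` has `μ(A) ≥_ℓ *`, i.e. `μ({f ≥_ℓ *}) ≥_ℓ *`. The last
condition forces `{f ≥_ℓ *}` to be nonempty since `μ(∅) = 0`.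
-/

namespace LinResLat

variable {L : Type*} [LinResLat L]

theorem bot_mul (a : L) : mul ⊥ a = ⊥ :=
  le_bot_iff.mp ((adjoint ⊥ a ⊥).mpr bot_le)

theorem mul_bot (a : L) : mul a ⊥ = ⊥ := by
  rw [mul_comm, bot_mul]

theorem mul_eq_bot_iff (hnzd : ∀ a b : L, mul a b = ⊥ → a = ⊥ ∨ b = ⊥) {a b : L} :
    mul a b = ⊥ ↔ a = ⊥ ∨ b = ⊥ :=
  ⟨hnzd a b, by rintro (rfl | rfl); exacts [bot_mul b, mul_bot a]⟩

end LinResLat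

namespace Dstar

variable {L : Type*} [LinResLat L]

theorem of_le_star {a : L} : (of a : Dstar L) ≤ star ↔ a = ⊥ := by
  simp [le_def, emb, Prod.Lex.le_iff]

theorem star_le_of {a : L} : (star : Dstar L) ≤ of a ↔ a ≠ ⊥ := by
  simp [le_def, emb, Prod.Lex.le_iff, bot_lt_iff_ne_bot]

theorem star_lt_of {a : L} : (star : Dstar L) < of a ↔ a ≠ ⊥ := by
  rw [← not_le, of_le_star]

theorem bot_lt_star : (⊥ : Dstar L) < star := by
  rw [bot_eq, ← not_le, star_le_of, not_not]

theorem star_lt_top : (star : Dstar L) < ⊤ :=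
  star_lt_of.mpr LinResLat.bot_lt_top.ne'

section NoZeroDivisors

variable (hnzd : ∀ a b : L, LinResLat.mul a b = ⊥ → a = ⊥ ∨ b = ⊥)
include hnzd

theorem dmul_le_star_iff {x y : Dstar L} : dmul x y ≤ star ↔ x ≤ star ∨ y ≤ star := by
  cases x <;> cases y <;>
    simp only [dmul, of_le_star, le_refl, or_true, true_or, LinResLat.mul_eq_bot_iff hnzd] <;>
    split_ifs <;> simp_all [of_le_star]

theorem star_le_dmul_iff {x y : Dstar L} : star ≤ dmul x y ↔ star ≤ x ∧ star ≤ y := by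
  cases x <;> cases y <;>
    simp only [dmul, star_le_of, le_refl, and_true, true_and, ne_eq,
      LinResLat.mul_eq_bot_iff hnzd, not_or] <;>
    split_ifs <;> simp_all [star_le_of]

variable {ι : Type*} [Fintype ι] {μ : Finset ι → Dstar L} {f : ι → Dstar L} (hmono : Monotone μ)
include hmono

theorem integMul_le_star_iff :
    integMul μ f ≤ star ↔ μ (Finset.univ.filter fun i => star < f i) ≤ star := by
  simp only [integMul, Finset.sup_le_iff, Finset.mem_powerset, Finset.subset_univ, true_implies,
    dmul_le_star_iff hnzd]
  constructor
  · intro h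
    refine (h _).resolve_right (not_le.mpr ((Finset.lt_inf_iff star_lt_top).mpr fun i hi => ?_))
    exact (Finset.mem_filter.mp hi).2
  · intro h A
    refine or_iff_not_imp_right.mpr fun hA => (hmono fun i hi => ?_).trans h
    exact Finset.mem_filter.mpr ⟨Finset.mem_univ i, (not_le.mp hA).trans_le (Finset.inf_le hi)⟩

theorem star_le_integMul_iff :
    star ≤ integMul μ f ↔ star ≤ μ (Finset.univ.filter fun i => star ≤ f i) := by
  simp only [integMul, Finset.le_sup_iff bot_lt_star, Finset.mem_powerset, Finset.subset_univ,
    true_and, star_le_dmul_iff hnzd]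
  constructor
  · rintro ⟨A, hμA, hfA⟩
    refine hμA.trans (hmono fun i hi => ?_)
    exact Finset.mem_filter.mpr ⟨Finset.mem_univ i, Finset.le_inf_iff.mp hfA i hi⟩
  · intro h
    exact ⟨_, h, Finset.le_inf fun i hi => (Finset.mem_filter.mp hi).2⟩

end NoZeroDivisors

end Dstar

open Dstar in
theorem integMul_eq_star_iff_general {L ι : Type*} [LinResLat L]
    [Fintype ι]
    (hnzd : ∀ a b : L, LinResLat.mul a b = ⊥ → a = ⊥ ∨ b = ⊥)
    (μ : Finset ι → Dstar L)
    (hμ0 : μ ∅ = Dstar.of ⊥)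
    (hmono : ∀ A B : Finset ι, A ⊆ B → μ A ≤ μ B)
    (f : ι → Dstar L) :
    integMul μ f = Dstar.star ↔
      (μ (Finset.univ.filter fun i => Dstar.star < f i) ≤ Dstar.star ∧
       Dstar.star ≤ μ (Finset.univ.filter fun i => Dstar.star ≤ f i) ∧
       ∃ i : ι, Dstar.of ⊥ < f i) := by
  have hμmono : Monotone μ := fun A B => hmono A B
  rw [le_antisymm_iff, integMul_le_star_iff hnzd hμmono, star_le_integMul_iff hnzd hμmono]
  refine and_congr_right fun _ => ⟨fun hge => ⟨hge, ?_⟩, And.left⟩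
  obtain ⟨i, hi⟩ : (Finset.univ.filter fun i => star ≤ f i).Nonempty := by
    rw [Finset.nonempty_iff_ne_empty]
    intro hempty
    rw [hempty, hμ0] at hge
    exact bot_lt_star.not_ge hge
  exact ⟨i, bot_lt_star.trans_le (Finset.mem_filter.mp hi).2⟩

open Dstar in
/-- `∫^{⊗_D}_{DPR,μ} f = *` if and only if `μ({i : f_i >_ℓ *}) ≤_ℓ *`,
`μ({i : f_i ≥_ℓ *}) ≥_ℓ *`, and `f_i >_ℓ 0` for at least one `i`. -/
theorem integMul_eq_star_iff {L ι : Type*} [LinResLat L]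
    [Fintype ι] [DecidableEq ι] [Nonempty ι]
    (hnzd : ∀ a b : L, LinResLat.mul a b = ⊥ → a = ⊥ ∨ b = ⊥)
    (μ : Finset ι → Dstar L)
    (hμ0 : μ ∅ = Dstar.of ⊥) (hμ1 : μ Finset.univ = Dstar.of ⊤)
    (hmono : ∀ A B : Finset ι, A ⊆ B → μ A ≤ μ B)
    (f : ι → Dstar L) :
    integMul μ f = Dstar.star ↔
      (μ (Finset.univ.filter fun i => Dstar.star < f i) ≤ Dstar.star ∧
       Dstar.star ≤ μ (Finset.univ.filter fun i => Dstar.star ≤ f i) ∧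
       ∃ i : ι, Dstar.of ⊥ < f i) :=
  integMul_eq_star_iff_general hnzd μ hμ0 hmono f
end

section
/- The residuum-based Dragonfly integral returns a known nonzero value exactly under: ∫^{→_D}_{DPR,μ} f >_ℓ * if and only if μ^c({i : f_i = 0}) = 0 and μ^c({i : f_i ≤_ℓ *}) <_ℓ 1. -/
section Aux

open Dstar

variable {L : Type*} [LinResLat L]

private lemma LRL.mul_bot' (a : L) : LinResLat.mul a ⊥ = ⊥ := by
  have h1 : LinResLat.mul (⊤ : L) (⊥ : L) = ⊥ := by
    rw [LinResLat.mul_comm, LinResLat.mul_one]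
  have h2 : (⊤ : L) ≤ LinResLat.imp ⊥ ⊥ := by
    rw [← LinResLat.adjoint, h1]
  have h3 : a ≤ LinResLat.imp (⊥ : L) ⊥ := le_trans le_top h2
  exact le_antisymm ((LinResLat.adjoint a ⊥ ⊥).mpr h3) bot_le

private lemma LRL.imp_bot' (b : L) : LinResLat.imp (⊥ : L) b = ⊤ := by
  refine le_antisymm le_top ?_
  rw [← LinResLat.adjoint, LRL.mul_bot']
  exact bot_le

private lemma LRL.imp_top' (b : L) : LinResLat.imp (⊤ : L) b = b := by
  refine le_antisymm ?_ ?_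
  · have := (LinResLat.adjoint (LinResLat.imp (⊤:L) b) ⊤ b).mpr le_rfl
    rwa [LinResLat.mul_one] at this
  · rw [← LinResLat.adjoint, LinResLat.mul_one]

private lemma LRL.neg_eq_bot' (hnzd : ∀ a b : L, LinResLat.mul a b = ⊥ → a = ⊥ ∨ b = ⊥)
    {a : L} (ha : a ≠ ⊥) : LinResLat.imp a ⊥ = ⊥ := by
  have h : LinResLat.mul (LinResLat.imp a ⊥) a ≤ ⊥ :=
    (LinResLat.adjoint _ a ⊥).mpr le_rfl
  rcases hnzd _ _ (le_bot_iff.mp h) with h' | h'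
  · exact h'
  · exact absurd h' ha

private lemma Dstar.lt_def' (x y : Dstar L) : x < y ↔ emb x < emb y := by
  rw [lt_iff_le_not_ge, lt_iff_le_not_ge, le_def, le_def]

private lemma Dstar.of_le_of' {a b : L} : (of a : Dstar L) ≤ of b ↔ a ≤ b := by
  rw [le_def]; simp only [emb, Prod.Lex.le_iff]
  constructor
  · rintro (h | ⟨h, -⟩)
    · exact h.le
    · exact h.le
  · intro h
    rcases h.lt_or_eq with h | h
    · exact Or.inl h
    · exact Or.inr ⟨h, le_rfl⟩

private lemma Dstar.of_lt_of' {a b : L} : (of a : Dstar L) < of b ↔ a < b := by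
  rw [Dstar.lt_def']; simp [emb, Prod.Lex.lt_iff]

private lemma Dstar.star_lt_of' {a : L} : (star : Dstar L) < of a ↔ ⊥ < a := by
  rw [Dstar.lt_def']; simp [emb, Prod.Lex.lt_iff]

private lemma Dstar.of_le_star' {a : L} : (of a : Dstar L) ≤ star ↔ a = ⊥ := by
  rw [le_def]; simp only [emb, Prod.Lex.le_iff]
  constructor
  · rintro (h | ⟨h, -⟩)
    · exact absurd h (not_lt.mpr bot_le)
    · exact h
  · intro h; exact Or.inr ⟨h, by simp⟩

private lemma Dstar.star_lt_top' : (star : Dstar L) < ⊤ := by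
  rw [top_eq, Dstar.star_lt_of']; exact LinResLat.bot_lt_top

private lemma Dstar.not_star_lt_star' : ¬ (star : Dstar L) < star := lt_irrefl _

/-- Characterization of the conjugate capacity values. -/
private lemma conj_cases {ι : Type*} [Fintype ι] [DecidableEq ι]
    (hnzd : ∀ a b : L, LinResLat.mul a b = ⊥ → a = ⊥ ∨ b = ⊥)
    (μ : Finset ι → Dstar L) (A : Finset ι) :
    (μ Aᶜ = of ⊥ ∧ conj μ A = of ⊤) ∨ (μ Aᶜ = star ∧ conj μ A = star) ∨
      (∃ a : L, a ≠ ⊥ ∧ μ Aᶜ = of a ∧ conj μ A = of ⊥) := by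
  rcases hA : μ Aᶜ with a | _
  · by_cases ha : a = ⊥
    · subst ha
      exact Or.inl ⟨rfl, by simp [conj, hA, dimp, LRL.imp_bot']⟩
    · exact Or.inr (Or.inr ⟨a, ha, rfl, by simp [conj, hA, dimp, LRL.neg_eq_bot' hnzd ha]⟩)
  · exact Or.inr (Or.inl ⟨rfl, by simp [conj, hA, dimp]⟩)

/-- Key pointwise characterization. -/
private lemma key_lemma {ι : Type*} [Fintype ι] [DecidableEq ι]
    (hnzd : ∀ a b : L, LinResLat.mul a b = ⊥ → a = ⊥ ∨ b = ⊥)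
    (μ : Finset ι → Dstar L) (f : ι → Dstar L) (A : Finset ι) :
    star < dimp (conj μ A) (A.sup f) ↔
      (μ Aᶜ = star → A.sup f ≠ of ⊥) ∧ (μ Aᶜ = of ⊥ → star < A.sup f) := by
  rcases conj_cases hnzd μ A with ⟨hA, hc⟩ | ⟨hA, hc⟩ | ⟨a, ha, hA, hc⟩
  · -- conj = of ⊤, μ Aᶜ = of ⊥
    rw [hc, hA]
    have hne : (of (⊥:L)) ≠ star := by simp
    rcases hs : A.sup f with b | _
    · have hd : dimp (of (⊤:L)) (of b) = of b := by simp [dimp, LRL.imp_top']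
      rw [hd]
      constructor
      · intro h
        exact ⟨fun h' => absurd h' hne,
               fun _ => h⟩
      · rintro ⟨-, h⟩; exact h rfl
    · have hd : dimp (of (⊤:L)) (star : Dstar L) = star := by
        simp [dimp, LinResLat.bot_lt_top.ne']
      rw [hd]
      constructor
      · intro h; exact absurd h Dstar.not_star_lt_star'
      · rintro ⟨-, h⟩; exact absurd (h rfl) Dstar.not_star_lt_star'
  · -- conj = star, μ Aᶜ = star
    rw [hc, hA]
    have hne : (star : Dstar L) ≠ of ⊥ := by simp
    rcases hs : A.sup f with b | _
    · by_cases hb : b = ⊥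
      · subst hb
        have hd : dimp (star : Dstar L) (of (⊥:L)) = star := by simp [dimp]
        rw [hd]
        constructor
        · intro h; exact absurd h Dstar.not_star_lt_star'
        · rintro ⟨h, -⟩; exact absurd rfl (h rfl)
      · have hd : dimp (star : Dstar L) (of b) = of b := by simp [dimp, hb]
        rw [hd, Dstar.star_lt_of']
        constructor
        · intro _
          exact ⟨fun _ h' => hb (Dstar.of.inj h'), fun h' => absurd h' hne⟩
        · intro _; exact Ne.bot_lt hb
    · have hd : dimp (star : Dstar L) (star : Dstar L) = of ⊤ := by simp [dimp]
      rw [hd, Dstar.star_lt_of']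
      constructor
      · intro _
        exact ⟨fun _ => hne, fun h' => absurd h' hne⟩
      · intro _; exact LinResLat.bot_lt_top
  · -- conj = of ⊥, μ Aᶜ = of a, a ≠ ⊥
    rw [hc, hA]
    have h1 : of a ≠ (star : Dstar L) := by simp
    have h2 : of a ≠ (of (⊥:L)) := by simpa using ha
    rcases hs : A.sup f with b | _
    · have hd : dimp (of (⊥:L)) (of b) = of ⊤ := by simp [dimp, LRL.imp_bot']
      rw [hd, Dstar.star_lt_of']
      exact ⟨fun _ => ⟨fun h => absurd h h1, fun h => absurd h h2⟩,
             fun _ => LinResLat.bot_lt_top⟩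
    · have hd : dimp (of (⊥:L)) (star : Dstar L) = of ⊤ := by simp [dimp]
      rw [hd, Dstar.star_lt_of']
      exact ⟨fun _ => ⟨fun h => absurd h h1, fun h => absurd h h2⟩,
             fun _ => LinResLat.bot_lt_top⟩

end Aux

open Dstar in
/-- `∫^{→_D}_{DPR,μ} f >_ℓ *` if and only if `μ^c({i : f_i = 0}) = 0` and
`μ^c({i : f_i ≤_ℓ *}) <_ℓ 1`. -/
theorem integImp_gt_star_iff {L ι : Type*} [LinResLat L]
    [Fintype ι] [DecidableEq ι] [Nonempty ι]
    (hnzd : ∀ a b : L, LinResLat.mul a b = ⊥ → a = ⊥ ∨ b = ⊥)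
    (μ : Finset ι → Dstar L)
    (hμ0 : μ ∅ = Dstar.of ⊥) (hμ1 : μ Finset.univ = Dstar.of ⊤)
    (hmono : ∀ A B : Finset ι, A ⊆ B → μ A ≤ μ B)
    (f : ι → Dstar L) :
    Dstar.star < integImp μ f ↔
      (conj μ (Finset.univ.filter fun i => f i = Dstar.of ⊥) = Dstar.of ⊥ ∧
       conj μ (Finset.univ.filter fun i => f i ≤ Dstar.star) < Dstar.of ⊤) := by
  classical
  set Z : Finset ι := Finset.univ.filter fun i => f i = Dstar.of ⊥ with hZdef
  set S : Finset ι := Finset.univ.filter fun i => f i ≤ Dstar.star with hSdef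
  rw [integImp, Finset.lt_inf_iff Dstar.star_lt_top']
  have hmem : ∀ A : Finset ι, A ∈ Finset.univ.powerset := fun A =>
    Finset.mem_powerset.mpr (Finset.subset_univ A)
  constructor
  · intro h
    have hZ := (key_lemma hnzd μ f Z).mp (h Z (hmem Z))
    have hS := (key_lemma hnzd μ f S).mp (h S (hmem S))
    have hZsup : Z.sup f = of ⊥ := by
      rw [← bot_eq]
      rw [Finset.sup_eq_bot_iff]
      intro i hi
      rw [hZdef, Finset.mem_filter] at hi
      rw [bot_eq]; exact hi.2
    have hSsup : S.sup f ≤ star := by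
      apply Finset.sup_le
      intro i hi
      rw [hSdef, Finset.mem_filter] at hi
      exact hi.2
    constructor
    · -- conj μ Z = of ⊥
      rcases conj_cases hnzd μ Z with ⟨hA, hc⟩ | ⟨hA, hc⟩ | ⟨a, ha, hA, hc⟩
      · exfalso
        have := hZ.2 hA
        rw [hZsup] at this
        have := this.trans_le (Dstar.of_le_star'.mpr rfl)
        exact Dstar.not_star_lt_star' this
      · exact absurd hZsup (hZ.1 hA)
      · exact hc
    · -- conj μ S < of ⊤
      rcases conj_cases hnzd μ S with ⟨hA, hc⟩ | ⟨hA, hc⟩ | ⟨a, ha, hA, hc⟩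
      · exfalso
        exact Dstar.not_star_lt_star' ((hS.2 hA).trans_le hSsup)
      · rw [hc]
        exact Dstar.star_lt_of'.mpr LinResLat.bot_lt_top
      · rw [hc, Dstar.of_lt_of']
        exact LinResLat.bot_lt_top
  · rintro ⟨h1, h2⟩ A -
    rw [key_lemma hnzd μ f A]
    -- from h1 : conj μ Z = of ⊥, get μ Zᶜ = of a with a ≠ ⊥
    obtain ⟨a, ha, hZA⟩ : ∃ a : L, a ≠ ⊥ ∧ μ Zᶜ = of a := by
      rcases conj_cases hnzd μ Z with ⟨hA, hc⟩ | ⟨hA, hc⟩ | ⟨a, ha, hA, hc⟩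
      · rw [hc] at h1
        exact absurd (Dstar.of.inj h1) LinResLat.bot_lt_top.ne'
      · rw [hc] at h1; exact absurd h1 (by simp)
      · exact ⟨a, ha, hA⟩
    -- from h2 : conj μ S < of ⊤, get μ Sᶜ ≠ of ⊥
    have hSA : μ Sᶜ ≠ of ⊥ := by
      intro hb
      rcases conj_cases hnzd μ S with ⟨hA, hc⟩ | ⟨hA, hc⟩ | ⟨b, hbne, hA, hc⟩
      · rw [hc] at h2; exact lt_irrefl _ h2
      · rw [hA] at hb; exact absurd hb (by simp)
      · rw [hA] at hb
        exact hbne (Dstar.of.inj hb)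
    constructor
    · intro hAs hsup
      -- A ⊆ Z, so Zᶜ ⊆ Aᶜ, so μ Zᶜ ≤ μ Aᶜ = star
      have hAZ : A ⊆ Z := by
        intro i hi
        rw [hZdef, Finset.mem_filter]
        refine ⟨Finset.mem_univ i, ?_⟩
        have hle : f i ≤ of ⊥ := (Finset.le_sup (f := f) hi).trans_eq hsup
        exact le_antisymm hle (by rw [← Dstar.bot_eq]; exact bot_le)
      have := (hmono _ _ (Finset.compl_subset_compl.mpr hAZ)).trans_eq hAs
      rw [hZA, Dstar.of_le_star'] at this
      exact ha this
    · intro hAb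
      by_contra hsup
      have hsup' : A.sup f ≤ Dstar.star := not_lt.mp hsup
      have hAS : A ⊆ S := by
        intro i hi
        rw [hSdef, Finset.mem_filter]
        exact ⟨Finset.mem_univ i, (Finset.le_sup (f := f) hi).trans hsup'⟩
      have := (hmono _ _ (Finset.compl_subset_compl.mpr hAS)).trans_eq hAb
      rw [← bot_eq, le_bot_iff, bot_eq] at this
      exact hSA this
end
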